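/- arXiv:2211.01436 — 2 statements merged into one kernel-verified Lean document; each statement's English description precedes it below -/
import Mathlib

section
/- For every integer a ≥ 2, the additive submonoid of ℕ generated by the set {l_a} ∪ {l_a + l_n : n ∈ ℕ} is equal to the additive submonoid generated by the finite set {l_a, l_a + l_0, l_a + l_1, …, l_a + l_{a-1}}, and this finite set is a minimal system of generators: no proper subset of it generates the same submonoid. -/
/-!
By the recurrence, every `l_n` with `n ≥ a` lies in the monoid generated by `l_a` and
`l_{a+1} = l_a + l_{a-1}`, so the generators `l_a + l_n` with `n ≥ a` are redundant. Conversely every generator `l_a + l_i` (`i < a`) lies in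
`[l_a, 2 l_a)`, while a sum of two or more nonzero generators is at least `2 l_a`; hence none of
them can be omitted.
-/

/-- The Lucas sequence: l 0 = 2, l 1 = 1, l (n+2) = l (n+1) + l n. -/
def lucas : ℕ → ℕ
  | 0 => 2
  | 1 => 1
  | n + 2 => lucas (n + 1) + lucas n

/-- The modified (monotone) Lucas sequence: l̃ 0 = 1, l̃ 1 = 2, l̃ n = l n for n ≥ 2. -/
def ltil : ℕ → ℕ
  | 0 => 1
  | 1 => 2
  | n + 2 => lucas (n + 2)

/-- β x : minimal number of summands in a representation of x as a sum of
modified Lucas numbers (with repetitions allowed). -/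
noncomputable def beta (x : ℕ) : ℕ :=
  sInf {s : ℕ | ∃ k : ℕ, ∃ b : ℕ → ℕ,
    x = ∑ i ∈ Finset.range (k + 1), b i * ltil i ∧ s = ∑ i ∈ Finset.range (k + 1), b i}

/-- γ x : the greatest k with l̃ k ≤ x (for x ≥ 1). -/
noncomputable def gamma (x : ℕ) : ℕ := sSup {k : ℕ | ltil k ≤ x}

/-- S a : the additive submonoid of ℕ generated by {l_a} ∪ {l_a + l_n : n ∈ ℕ}. -/
def Sset (a : ℕ) : AddSubmonoid ℕ :=
  AddSubmonoid.closure ({lucas a} ∪ {x : ℕ | ∃ n : ℕ, x = lucas a + lucas n})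

/-- T a : the additive submonoid of ℕ generated by {l_a + l_n : n ∈ ℕ}. -/
def Tset (a : ℕ) : AddSubmonoid ℕ :=
  AddSubmonoid.closure {x : ℕ | ∃ n : ℕ, x = lucas a + lucas n}

theorem lucas_add_two (n : ℕ) : lucas (n + 2) = lucas (n + 1) + lucas n := rfl

theorem lucas_pos : ∀ n, 0 < lucas n
  | 0 => by decide
  | 1 => by decide
  | n + 2 => by rw [lucas_add_two]; exact Nat.add_pos_left (lucas_pos (n + 1)) _

theorem strictMono_lucas_succ : StrictMono fun n => lucas (n + 1) :=
  strictMono_nat_of_lt_succ fun n => by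
    simp only [lucas_add_two]
    exact Nat.lt_add_of_pos_right (lucas_pos n)

theorem lucas_lt_lucas {i a : ℕ} (ha : 2 ≤ a) (hi : i < a) : lucas i < lucas a := by
  obtain ⟨b, rfl⟩ : ∃ b, a = b + 1 := ⟨a - 1, by omega⟩
  cases i with
  | zero =>
    calc lucas 0 < lucas (1 + 1) := by decide
      _ ≤ lucas (b + 1) := strictMono_lucas_succ.monotone (by omega)
  | succ j => exact strictMono_lucas_succ (by omega)

theorem lucas_mem_of_le {M : AddSubmonoid ℕ} {a : ℕ} (h₀ : lucas a ∈ M)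
    (h₁ : lucas (a + 1) ∈ M) {n : ℕ} (hn : a ≤ n) : lucas n ∈ M := by
  have consecutive : ∀ k, lucas (a + k) ∈ M ∧ lucas (a + k + 1) ∈ M := by
    intro k
    induction k with
    | zero => exact ⟨h₀, h₁⟩
    | succ k ih => exact ⟨ih.2, by rw [← add_assoc, lucas_add_two]; exact add_mem ih.2 ih.1⟩
  obtain ⟨k, rfl⟩ := Nat.exists_eq_add_of_le hn
  exact (consecutive k).1

theorem AddSubmonoid.mem_of_mem_closure_of_lt_two_mul {Y : Set ℕ} {m x : ℕ}
    (hY : ∀ y ∈ Y, m ≤ y) (hx : x ∈ AddSubmonoid.closure Y) (hx₀ : x ≠ 0) (hx₂ : x < 2 * m) :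
    x ∈ Y := by
  have : x = 0 ∨ x ∈ Y ∨ 2 * m ≤ x := by
    clear hx₀ hx₂
    induction hx using AddSubmonoid.closure_induction with
    | mem y hy => exact .inr (.inl hy)
    | zero => exact .inl rfl
    | add y z _ _ hy hz =>
      have large : ∀ w, w = 0 ∨ w ∈ Y ∨ 2 * m ≤ w → w = 0 ∨ m ≤ w := by
        rintro w (hw | hw | hw)
        exacts [.inl hw, .inr (hY w hw), .inr (by omega)]
      rcases large y hy with rfl | hy' <;> rcases large z hz with rfl | hz'
      · exact .inl rfl
      · simpa using hz
      · simpa using hy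
      · exact .inr (.inr (by omega))
  rcases this with h | h | h
  exacts [absurd h hx₀, h, absurd h (by omega)]

theorem AddSubmonoid.closure_ne_closure_of_ssubset {Y G : Set ℕ} {m : ℕ}
    (hG : ∀ g ∈ G, m ≤ g ∧ g < 2 * m) (hYG : Y ⊂ G) :
    AddSubmonoid.closure Y ≠ AddSubmonoid.closure G := by
  intro h
  obtain ⟨g, hgG, hgY⟩ := Set.exists_of_ssubset hYG
  have hg := hG g hgG
  refine hgY (mem_of_mem_closure_of_lt_two_mul (fun y hy => (hG y (hYG.subset hy)).1) ?_
    (by omega) hg.2)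
  exact h ▸ AddSubmonoid.subset_closure hgG

def lucasGenerators (a : ℕ) : Finset ℕ :=
  insert (lucas a) ((Finset.range a).image fun i => lucas a + lucas i)

theorem mem_lucasGenerators {a x : ℕ} :
    x ∈ lucasGenerators a ↔ x = lucas a ∨ ∃ i < a, lucas a + lucas i = x := by
  simp [lucasGenerators]

theorem lucasGenerators_bounds {a x : ℕ} (ha : 2 ≤ a) (hx : x ∈ lucasGenerators a) :
    lucas a ≤ x ∧ x < 2 * lucas a := by
  have := lucas_pos a
  rcases mem_lucasGenerators.1 hx with rfl | ⟨i, hi, rfl⟩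
  · omega
  · have := lucas_lt_lucas ha hi
    omega

theorem Sset_eq_closure_lucasGenerators {a : ℕ} (ha : 1 ≤ a) :
    Sset a = AddSubmonoid.closure (lucasGenerators a : Set ℕ) := by
  set C := AddSubmonoid.closure (lucasGenerators a : Set ℕ)
  have gen_mem : ∀ {x}, x = lucas a ∨ (∃ i < a, lucas a + lucas i = x) → x ∈ C :=
    fun hx => AddSubmonoid.subset_closure (mem_lucasGenerators.2 hx)
  have lucas_a_mem : lucas a ∈ C := gen_mem (.inl rfl)
  have lucas_mem : ∀ n, a ≤ n → lucas n ∈ C := by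
    refine fun n hn => lucas_mem_of_le lucas_a_mem ?_ hn
    obtain ⟨b, rfl⟩ : ∃ b, a = b + 1 := ⟨a - 1, by omega⟩
    exact gen_mem (.inr ⟨b, by omega, (lucas_add_two b).symm⟩)
  apply le_antisymm
  · refine AddSubmonoid.closure_le.2 ?_
    rintro x (rfl | ⟨n, rfl⟩)
    · exact lucas_a_mem
    · rcases Nat.lt_or_ge n a with hn | hn
      · exact gen_mem (.inr ⟨n, hn, rfl⟩)
      · exact add_mem lucas_a_mem (lucas_mem n hn)
  · refine AddSubmonoid.closure_mono fun x hx => ?_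
    rcases mem_lucasGenerators.1 hx with rfl | ⟨i, -, rfl⟩
    exacts [.inl rfl, .inr ⟨i, rfl⟩]

theorem minimal_generators_S (a : ℕ) (ha : 2 ≤ a) :
    Sset a =
      AddSubmonoid.closure
        ((insert (lucas a) ((Finset.range a).image fun i => lucas a + lucas i) : Finset ℕ) :
          Set ℕ) ∧
    ∀ Y : Finset ℕ,
      Y ⊂ insert (lucas a) ((Finset.range a).image fun i => lucas a + lucas i) →
      AddSubmonoid.closure (Y : Set ℕ) ≠ Sset a := by
  have hS := Sset_eq_closure_lucasGenerators (a := a) (by omega)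
  refine ⟨hS, fun Y hY => ?_⟩
  rw [hS]
  exact AddSubmonoid.closure_ne_closure_of_ssubset (fun g hg => lucasGenerators_bounds ha hg)
    (Finset.coe_ssubset.2 hY)
end

section
/- Let a ≥ 2 be an integer and let (b_0, …, b_{a-1}) be a tuple of natural numbers with Σ_{i=0}^{a-1} b_i·l̃_i ≥ l̃_a. Then there exists a tuple (c_0, …, c_{a-1}) of natural numbers such that Σ_{i=0}^{a-1} b_i·l̃_i = l̃_a + Σ_{i=0}^{a-1} c_i·l̃_i and Σ_{i=0}^{a-1} c_i < Σ_{i=0}^{a-1} b_i. -/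
/-!
Represent a sum of modified Lucas numbers by the multiset of indices of its summands and
induct strongly on `a = m + 1`. Two copies of `ltil m` merge, via
`2 * ltil m = ltil (m + 1) + ltil w`, into one summand fewer. Otherwise one copy of `ltil m` is
removed, directly or by induction, leaving only summands below `m`; the remaining part `ltil r`
of `ltil (m + 1) = ltil m + ltil r` is then taken from these without increasing their number:
drop a copy of `ltil r`, trade a copy of `ltil (r + 1)` for the complementary `ltil r'`, or
apply the induction hypothesis at `r`.
-/

open Multiset

/-- Here `r = n - 1`, except for `ltil 3 = ltil 2 + ltil 0`: the Lucas recurrence fails for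
`ltil` there, hence the weaker bound `n ≤ r + 2`. -/
lemma exists_ltil_succ_eq_add (n : ℕ) :
    ∃ r ≤ n - 1, n ≤ r + 2 ∧ ltil (n + 1) = ltil n + ltil r :=
  match n with
  | 0 => ⟨0, le_rfl, by norm_num, rfl⟩
  | 1 => ⟨0, le_rfl, by norm_num, rfl⟩
  | 2 => ⟨0, by norm_num, le_rfl, rfl⟩
  | k + 3 => ⟨k + 2, by omega, by omega, rfl⟩

lemma exists_two_mul_ltil_eq_add {n : ℕ} (hn : 1 ≤ n) :
    ∃ w < n, 2 * ltil n = ltil (n + 1) + ltil w :=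
  match n, hn with
  | 1, _ => ⟨0, by norm_num, rfl⟩
  | 2, _ => ⟨1, by norm_num, rfl⟩
  | 3, _ => ⟨0, by norm_num, rfl⟩
  | k + 4, _ =>
    have h5 : ltil (k + 4 + 1) = ltil (k + 4) + ltil (k + 3) := rfl
    have h4 : ltil (k + 4) = ltil (k + 3) + ltil (k + 2) := rfl
    ⟨k + 2, by omega, by omega⟩

def SplitsOffLtil (a : ℕ) : Prop :=
  ∀ s : Multiset ℕ, (∀ i ∈ s, i < a) → ltil a ≤ (s.map ltil).sum →
    ∃ t : Multiset ℕ, (∀ i ∈ t, i < a) ∧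
      (s.map ltil).sum = ltil a + (t.map ltil).sum ∧ card t < card s

lemma exists_card_le_of_splitsOffLtil {q : ℕ} (hq : SplitsOffLtil q) {s : Multiset ℕ}
    (hs : ∀ i ∈ s, i < q + 2) (h : ltil q ≤ (s.map ltil).sum) :
    ∃ t : Multiset ℕ, (∀ i ∈ t, i < q + 2) ∧
      (s.map ltil).sum = ltil q + (t.map ltil).sum ∧ card t ≤ card s := by
  by_cases hqs : q ∈ s
  · exact ⟨s.erase q, fun i hi => hs i (mem_of_mem_erase hi), (sum_map_erase hqs).symm,
      card_erase_le⟩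
  by_cases hqs' : q + 1 ∈ s
  · obtain ⟨r, hr, -, hsplit⟩ := exists_ltil_succ_eq_add q
    refine ⟨r ::ₘ s.erase (q + 1), ?_, ?_, ?_⟩
    · intro i hi
      rcases mem_cons.1 hi with rfl | hi
      · omega
      · exact hs i (mem_of_mem_erase hi)
    · rw [map_cons, sum_cons, ← sum_map_erase hqs', hsplit]
      ring
    · rw [card_cons, card_erase_add_one hqs']
  · have hs' : ∀ i ∈ s, i < q := fun i hi => by
      have := hs i hi
      have := ne_of_mem_of_not_mem hi hqs
      have := ne_of_mem_of_not_mem hi hqs'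
      omega
    obtain ⟨t, ht, hst, hcard⟩ := hq s hs' h
    exact ⟨t, fun i hi => by have := ht i hi; omega, hst, hcard.le⟩

lemma splitsOffLtil_one : SplitsOffLtil 1 := by
  intro s hs h
  obtain ⟨n, rfl⟩ : ∃ n, s = replicate n 0 :=
    ⟨_, eq_replicate_card.2 fun i hi => by have := hs i hi; omega⟩
  have hn : 2 ≤ n := by simpa [ltil] using h
  refine ⟨replicate (n - 2) 0, by simp [mem_replicate], ?_, ?_⟩
  · simp only [map_replicate, sum_replicate, ltil, smul_eq_mul]
    omega
  · simp only [card_replicate]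
    omega

lemma splitsOffLtil_succ {m : ℕ} (hm : 1 ≤ m) (ih : ∀ k ≤ m, SplitsOffLtil k) :
    SplitsOffLtil (m + 1) := by
  intro s hs h
  by_cases hdouble : m ∈ s.erase m
  · obtain ⟨w, hw, hdbl⟩ := exists_two_mul_ltil_eq_add hm
    have hms : m ∈ s := mem_of_mem_erase hdouble
    refine ⟨w ::ₘ (s.erase m).erase m, ?_, ?_, ?_⟩
    · intro i hi
      rcases mem_cons.1 hi with rfl | hi
      · omega
      · exact hs i (mem_of_mem_erase (mem_of_mem_erase hi))
    · rw [map_cons, sum_cons, ← sum_map_erase hms, ← sum_map_erase hdouble]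
      omega
    · rw [card_cons, ← card_erase_add_one hms, ← card_erase_add_one hdouble]
      omega
  obtain ⟨r, hr, hmr, hsplit⟩ := exists_ltil_succ_eq_add m
  obtain ⟨u, hu, hsu, hus⟩ : ∃ u : Multiset ℕ, (∀ i ∈ u, i < m) ∧
      (s.map ltil).sum = ltil m + (u.map ltil).sum ∧ card u < card s := by
    by_cases hms : m ∈ s
    · refine ⟨s.erase m, fun i hi => ?_, (sum_map_erase hms).symm, card_erase_lt_of_mem hms⟩
      have := hs i (mem_of_mem_erase hi)
      have := ne_of_mem_of_not_mem hi hdouble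
      omega
    · refine ih m le_rfl s (fun i hi => ?_) (by omega)
      have := hs i hi
      have := ne_of_mem_of_not_mem hi hms
      omega
  obtain ⟨t, ht, hut, htu⟩ :=
    exists_card_le_of_splitsOffLtil (ih r (by omega)) (s := u) (fun i hi => by
      have := hu i hi; omega) (by omega)
  exact ⟨t, fun i hi => by have := ht i hi; omega, by omega, by omega⟩

theorem splitsOffLtil (a : ℕ) : SplitsOffLtil a := by
  induction a using Nat.strong_induction_on with
  | _ a ih =>
    match a, ih with
    | 0, _ =>
      intro s hs h
      have hs0 : s = 0 := eq_zero_of_forall_notMem fun i hi => Nat.not_lt_zero i (hs i hi)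
      simp [hs0, ltil] at h
    | 1, _ => exact splitsOffLtil_one
    | m + 2, ih => exact splitsOffLtil_succ (by omega) fun k hk => ih k (by omega)

lemma exists_multiset_count_eq (b : ℕ → ℕ) (a : ℕ) :
    ∃ s : Multiset ℕ, (∀ i ∈ s, i < a) ∧ ∀ i ∈ Finset.range a, b i = s.count i := by
  refine ⟨∑ i ∈ Finset.range a, replicate (b i) i, fun i hi => ?_, fun i hi => ?_⟩
  · obtain ⟨j, hj, hij⟩ := Multiset.mem_sum.1 hi
    rw [eq_of_mem_replicate hij]
    exact Finset.mem_range.1 hj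
  · simp [Multiset.count_sum', count_replicate, Finset.mem_range.1 hi]

lemma sum_range_count_mul_eq_sum_map {a : ℕ} {s : Multiset ℕ} (hs : ∀ i ∈ s, i < a)
    (f : ℕ → ℕ) : ∑ i ∈ Finset.range a, s.count i * f i = (s.map f).sum := by
  rw [Finset.sum_multiset_map_count]
  refine (Finset.sum_subset (fun i hi => Finset.mem_range.2 (hs i (mem_toFinset.1 hi)))
    fun i _ hi => ?_).symm
  simp [count_eq_zero.2 (mt mem_toFinset.2 hi)]

theorem reduce_by_ltil_general (a : ℕ) (b : ℕ → ℕ)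
    (hb : ltil a ≤ ∑ i ∈ Finset.range a, b i * ltil i) :
    ∃ c : ℕ → ℕ,
      ∑ i ∈ Finset.range a, b i * ltil i = ltil a + ∑ i ∈ Finset.range a, c i * ltil i ∧
      ∑ i ∈ Finset.range a, c i < ∑ i ∈ Finset.range a, b i := by
  obtain ⟨s, hs, hcount⟩ := exists_multiset_count_eq b a
  have hS : ∑ i ∈ Finset.range a, b i * ltil i = (s.map ltil).sum := by
    rw [← sum_range_count_mul_eq_sum_map hs]
    exact Finset.sum_congr rfl fun i hi => by rw [hcount i hi]
  have hT : ∑ i ∈ Finset.range a, b i = card s := by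
    rw [← sum_count_eq_card fun i hi => Finset.mem_range.2 (hs i hi)]
    exact Finset.sum_congr rfl hcount
  obtain ⟨t, ht, hst, hts⟩ := splitsOffLtil a s hs (hS ▸ hb)
  refine ⟨fun i => t.count i, ?_, ?_⟩
  · rw [hS, hst, sum_range_count_mul_eq_sum_map ht]
  · rwa [hT, sum_count_eq_card fun i hi => Finset.mem_range.2 (ht i hi)]

theorem reduce_by_ltil (a : ℕ) (ha : 2 ≤ a) (b : ℕ → ℕ)
    (hb : ltil a ≤ ∑ i ∈ Finset.range a, b i * ltil i) :
    ∃ c : ℕ → ℕ,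
      ∑ i ∈ Finset.range a, b i * ltil i = ltil a + ∑ i ∈ Finset.range a, c i * ltil i ∧
      ∑ i ∈ Finset.range a, c i < ∑ i ∈ Finset.range a, b i :=
  reduce_by_ltil_general a b hb
end
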